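/- Fix an integer s ≥ 3, set t = t_s, and fix an integer m with s−t ≤ m ≤ s−1. Define δ(s,m) := −m² + (2s+3)·m − s·(s+1). Then δ(s,m) > 0, and for N_s^{s,s}-bootstrap percolation on [k]×[k] with p-random initial set there exist constants ε₀ > 0, κ > 0 and p₀ > 0 such that for all 0 < p < p₀ and every integer k with ε₀·p^{−m} ≤ k < ε₀·p^{−(m+1)}, one has ℙ_p(I^•([k]²)) ≥ 1 − exp(−κ·p^{−δ(s,m)/2}). -/

import Mathlib

open Finset
open scoped Classical

/-- The neighbourhood of `N_s^{s,s}`-bootstrap percolation in `ℤ²`. -/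
noncomputable def nbhd2 (s : ℕ) : Finset (ℤ × ℤ) :=
  (((Finset.Icc (-(s : ℤ)) (s : ℤ)).erase 0).image fun i => ((i, 0) : ℤ × ℤ)) ∪
  (((Finset.Icc (-(s : ℤ)) (s : ℤ)).erase 0).image fun i => ((0, i) : ℤ × ℤ))

/-- The number of neighbours of `v` (within the region `R`) lying in the set `B`. -/
noncomputable def infCount2 (s : ℕ) (R B : Set (ℤ × ℤ)) (v : ℤ × ℤ) : ℕ :=
  ((nbhd2 s).filter fun x => v + x ∈ R ∧ v + x ∈ B).card

/-- The `N_s^{s,s}`-bootstrap closure (threshold `r`) of `A ∩ R` inside the region `R`. -/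
def closure2 (s r : ℕ) (R A : Set (ℤ × ℤ)) : Set (ℤ × ℤ) :=
  ⋂₀ {B : Set (ℤ × ℤ) | A ∩ R ⊆ B ∧ ∀ v ∈ R, r ≤ infCount2 s R B v → v ∈ B}

/-- The rectangle `[l] × [k] ⊆ ℤ²`. -/
noncomputable def rect2 (l k : ℕ) : Finset (ℤ × ℤ) :=
  (Finset.Icc (1 : ℤ) (l : ℤ)) ×ˢ (Finset.Icc (1 : ℤ) (k : ℤ))

/-- `R` is internally filled by the initial set `A` under `N_s^{s,s}`-bootstrap percolation. -/
def IntFilled2 (s r : ℕ) (R A : Finset (ℤ × ℤ)) : Prop :=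
  closure2 s r (↑R) (↑A) = (↑R : Set (ℤ × ℤ))

/-- The probability of the event `E` when each vertex of `V` is included in the initial
set independently with probability `p`. -/
noncomputable def probOn2 (p : ℝ) (V : Finset (ℤ × ℤ)) (E : Finset (ℤ × ℤ) → Prop) : ℝ :=
  ∑ A ∈ V.powerset, if E A then p ^ A.card * (1 - p) ^ (V.card - A.card) else 0

/-- `t_s = ⌈(√(9+8s) - 5)/2⌉`. -/
noncomputable def tseq (s : ℕ) : ℕ := ⌈(Real.sqrt (9 + 8 * (s : ℝ)) - 5) / 2⌉₊

/-- `α_s = ((t_s+1)/(t_s+2)) * (s - t_s/2)`. -/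
noncomputable def alphaseq (s : ℕ) : ℝ :=
  (((tseq s : ℝ) + 1) / ((tseq s : ℝ) + 2)) * ((s : ℝ) - (tseq s : ℝ) / 2)

lemma mul_succ_le {a b s : ℕ} (h : a < b) : a * s + s ≤ b * s := by
  calc a * s + s = (a + 1) * s := by ring
  _ ≤ b * s := mul_le_mul_left h s

section prob
variable {p : ℝ}

lemma probOn2_nonneg (hp0 : 0 ≤ p) (hp1 : p ≤ 1) (V : Finset (ℤ × ℤ))
    (E : Finset (ℤ × ℤ) → Prop) : 0 ≤ probOn2 p V E := by
  refine Finset.sum_nonneg fun A _ => ?_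
  have h1 : (0:ℝ) ≤ 1 - p := by linarith
  split <;> positivity

lemma probOn2_congr {V : Finset (ℤ × ℤ)} {E F : Finset (ℤ × ℤ) → Prop}
    (h : ∀ A ∈ V.powerset, (E A ↔ F A)) : probOn2 p V E = probOn2 p V F := by
  refine Finset.sum_congr rfl fun A hA => ?_
  rw [if_congr (h A hA) rfl rfl]

lemma probOn2_mono (hp0 : 0 ≤ p) (hp1 : p ≤ 1) {V : Finset (ℤ × ℤ)}
    {E F : Finset (ℤ × ℤ) → Prop} (h : ∀ A ∈ V.powerset, E A → F A) :
    probOn2 p V E ≤ probOn2 p V F := by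
  refine Finset.sum_le_sum fun A hA => ?_
  have h1 : (0:ℝ) ≤ 1 - p := by linarith
  by_cases hE : E A
  · rw [if_pos hE, if_pos (h A hA hE)]
  · rw [if_neg hE]; split <;> positivity

lemma probOn2_true (V : Finset (ℤ × ℤ)) : probOn2 p V (fun _ => True) = 1 := by
  unfold probOn2
  simp only [if_true]
  rw [Finset.sum_pow_mul_eq_add_pow p (1 - p) V]
  simp

lemma probOn2_not (V : Finset (ℤ × ℤ)) (E : Finset (ℤ × ℤ) → Prop) :
    probOn2 p V (fun A => ¬ E A) = 1 - probOn2 p V E := by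
  have h : (∑ A ∈ V.powerset, p ^ A.card * (1 - p) ^ (V.card - A.card)) = 1 := by
    rw [Finset.sum_pow_mul_eq_add_pow p (1 - p) V]; simp
  unfold probOn2
  rw [eq_sub_iff_add_eq, ← Finset.sum_add_distrib]
  conv_rhs => rw [← h]
  refine Finset.sum_congr rfl fun A hA => ?_
  by_cases hE : E A <;> simp [hE]

/-- Sum over powerset of a disjoint union factors as a double sum. -/
lemma sum_powerset_disjUnion {α : Type*} [DecidableEq α] {V₁ V₂ : Finset α}
    (h : Disjoint V₁ V₂) (f : Finset α → ℝ) :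
    ∑ A ∈ (V₁ ∪ V₂).powerset, f A
      = ∑ A₁ ∈ V₁.powerset, ∑ A₂ ∈ V₂.powerset, f (A₁ ∪ A₂) := by
  have hprod := Finset.sum_product' (β := ℝ) V₁.powerset V₂.powerset
    (fun A₁ A₂ => f (A₁ ∪ A₂))
  rw [← hprod]
  refine Finset.sum_nbij' (fun A => (A ∩ V₁, A ∩ V₂)) (fun P => P.1 ∪ P.2) ?_ ?_ ?_ ?_ ?_
  · intro A hA
    simp only [Finset.mem_powerset] at hA
    simp only [Finset.mem_product, Finset.mem_powerset]
    exact ⟨Finset.inter_subset_right, Finset.inter_subset_right⟩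
  · intro P hP
    simp only [Finset.mem_product, Finset.mem_powerset] at hP
    simp only [Finset.mem_powerset]
    exact Finset.union_subset_union hP.1 hP.2
  · intro A hA
    simp only [Finset.mem_powerset] at hA
    show A ∩ V₁ ∪ A ∩ V₂ = A
    rw [← Finset.inter_union_distrib_left, Finset.inter_eq_left]
    exact hA
  · intro P hP
    simp only [Finset.mem_product, Finset.mem_powerset] at hP
    have e2 : P.2 ∩ V₁ = ∅ := Finset.disjoint_iff_inter_eq_empty.1 (h.symm.mono_left hP.2)
    have e1 : P.1 ∩ V₂ = ∅ := Finset.disjoint_iff_inter_eq_empty.1 (h.mono_left hP.1)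
    have h1 : (P.1 ∪ P.2) ∩ V₁ = P.1 := by
      rw [Finset.union_inter_distrib_right, Finset.inter_eq_left.2 hP.1, e2, Finset.union_empty]
    have h2 : (P.1 ∪ P.2) ∩ V₂ = P.2 := by
      rw [Finset.union_inter_distrib_right, Finset.inter_eq_left.2 hP.2, e1, Finset.empty_union]
    show ((P.1 ∪ P.2) ∩ V₁, (P.1 ∪ P.2) ∩ V₂) = P
    rw [h1, h2]
  · intro A hA
    simp only [Finset.mem_powerset] at hA
    have : A ∩ V₁ ∪ A ∩ V₂ = A := by
      rw [← Finset.inter_union_distrib_left, Finset.inter_eq_left]; exact hA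
    simp only [this]

/-- Independence across disjoint vertex sets. -/
lemma probOn2_union {V₁ V₂ : Finset (ℤ × ℤ)} (h : Disjoint V₁ V₂)
    (E₁ E₂ : Finset (ℤ × ℤ) → Prop)
    (hl₁ : ∀ A, E₁ A ↔ E₁ (A ∩ V₁)) (hl₂ : ∀ A, E₂ A ↔ E₂ (A ∩ V₂)) :
    probOn2 p (V₁ ∪ V₂) (fun A => E₁ A ∧ E₂ A)
      = probOn2 p V₁ E₁ * probOn2 p V₂ E₂ := by
  unfold probOn2
  rw [sum_powerset_disjUnion h, Finset.sum_mul_sum]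
  refine Finset.sum_congr rfl fun A₁ hA₁ => Finset.sum_congr rfl fun A₂ hA₂ => ?_
  simp only [Finset.mem_powerset] at hA₁ hA₂
  have e2 : A₂ ∩ V₁ = ∅ := Finset.disjoint_iff_inter_eq_empty.1 (h.symm.mono_left hA₂)
  have e1 : A₁ ∩ V₂ = ∅ := Finset.disjoint_iff_inter_eq_empty.1 (h.mono_left hA₁)
  have h1 : (A₁ ∪ A₂) ∩ V₁ = A₁ := by
    rw [Finset.union_inter_distrib_right, Finset.inter_eq_left.2 hA₁, e2, Finset.union_empty]
  have h2 : (A₁ ∪ A₂) ∩ V₂ = A₂ := by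
    rw [Finset.union_inter_distrib_right, Finset.inter_eq_left.2 hA₂, e1, Finset.empty_union]
  have hd : Disjoint A₁ A₂ := h.mono hA₁ hA₂
  have hcard : (A₁ ∪ A₂).card = A₁.card + A₂.card := Finset.card_union_of_disjoint hd
  have hcardV : (V₁ ∪ V₂).card = V₁.card + V₂.card := Finset.card_union_of_disjoint h
  have hE1 : E₁ (A₁ ∪ A₂) ↔ E₁ A₁ := by rw [hl₁ (A₁ ∪ A₂), h1]
  have hE2 : E₂ (A₁ ∪ A₂) ↔ E₂ A₂ := by rw [hl₂ (A₁ ∪ A₂), h2]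
  have hw : p ^ (A₁ ∪ A₂).card * (1 - p) ^ ((V₁ ∪ V₂).card - (A₁ ∪ A₂).card)
      = (p ^ A₁.card * (1 - p) ^ (V₁.card - A₁.card))
        * (p ^ A₂.card * (1 - p) ^ (V₂.card - A₂.card)) := by
    rw [hcard, hcardV, pow_add]
    have : V₁.card + V₂.card - (A₁.card + A₂.card)
        = (V₁.card - A₁.card) + (V₂.card - A₂.card) := by
      have b1 := Finset.card_le_card hA₁
      have b2 := Finset.card_le_card hA₂
      omega
    rw [this, pow_add]; ring
  by_cases he1 : E₁ A₁ <;> by_cases he2 : E₂ A₂ <;>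
    simp [hE1, hE2, he1, he2, hw]

/-- Independence across a finite disjoint family. -/
lemma probOn2_family {n : ℕ} (W : ℕ → Finset (ℤ × ℤ)) (E : ℕ → Finset (ℤ × ℤ) → Prop)
    (hd : ∀ i < n, ∀ j < n, i ≠ j → Disjoint (W i) (W j))
    (hl : ∀ i < n, ∀ A, E i A ↔ E i (A ∩ W i)) :
    probOn2 p ((Finset.range n).biUnion W) (fun A => ∀ i < n, E i A)
      = ∏ i ∈ Finset.range n, probOn2 p (W i) (E i) := by
  induction n with
  | zero => simp [probOn2]
  | succ n ih =>
    have hdis : Disjoint (W n) ((Finset.range n).biUnion W) := by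
      rw [Finset.disjoint_biUnion_right]
      intro i hi
      exact (hd n (by omega) i (by simp at hi; omega) (by simp at hi; omega)).symm.symm
    have hbU : (Finset.range (n+1)).biUnion W = W n ∪ (Finset.range n).biUnion W := by
      rw [Finset.range_add_one, Finset.biUnion_insert]
    rw [hbU]
    have step := probOn2_union (p := p) hdis (E n) (fun A => ∀ i < n, E i A)
      (hl n (by omega))
      (by
        intro A
        constructor
        · intro hA i hi
          rw [hl i (by omega) (A ∩ (Finset.range n).biUnion W)]
          have : A ∩ (Finset.range n).biUnion W ∩ W i = A ∩ W i := by
            rw [Finset.inter_assoc]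
            congr 1
            rw [Finset.inter_eq_right.2]
            exact fun x hx => Finset.mem_biUnion.2 ⟨i, Finset.mem_range.2 hi, hx⟩
          rw [this, ← hl i (by omega) A]
          exact hA i hi
        · intro hA i hi
          rw [hl i (by omega) A]
          have : A ∩ (Finset.range n).biUnion W ∩ W i = A ∩ W i := by
            rw [Finset.inter_assoc]
            congr 1
            rw [Finset.inter_eq_right.2]
            exact fun x hx => Finset.mem_biUnion.2 ⟨i, Finset.mem_range.2 hi, hx⟩
          rw [← this, ← hl i (by omega) (A ∩ (Finset.range n).biUnion W)]
          exact hA i hi)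
    have congr1 : probOn2 p (W n ∪ (Finset.range n).biUnion W) (fun A => ∀ i < n + 1, E i A)
        = probOn2 p (W n ∪ (Finset.range n).biUnion W)
            (fun A => E n A ∧ ∀ i < n, E i A) := by
      refine probOn2_congr fun A _ => ?_
      constructor
      · intro hA; exact ⟨hA n (by omega), fun i hi => hA i (by omega)⟩
      · rintro ⟨h1, h2⟩ i hi
        rcases Nat.lt_succ_iff_lt_or_eq.1 hi with hi' | rfl
        · exact h2 i hi'
        · exact h1
    rw [congr1, step, Finset.range_add_one, Finset.prod_insert (by simp)]
    rw [ih (fun i hi j hj hij => hd i (by omega) j (by omega) hij)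
      (fun i hi A => hl i (by omega) A)]

/-- Probability that a fixed set is fully infected. -/
lemma probOn2_subset_event {W V : Finset (ℤ × ℤ)} (hWV : W ⊆ V) :
    probOn2 p V (fun A => W ⊆ A) = p ^ W.card := by
  classical
  have hVsplit : V = W ∪ (V \ W) := by rw [Finset.union_sdiff_of_subset hWV]
  have hdis : Disjoint W (V \ W) := Finset.disjoint_sdiff
  have := probOn2_union (p := p) hdis (fun A => W ⊆ A) (fun _ => True)
    (by intro A; show W ⊆ A ↔ W ⊆ A ∩ W
        rw [Finset.subset_inter_iff]; tauto) (by tauto)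
  rw [hVsplit]
  have congr1 : probOn2 p (W ∪ (V \ W)) (fun A => W ⊆ A)
      = probOn2 p (W ∪ (V \ W)) (fun A => W ⊆ A ∧ True) := probOn2_congr (by tauto)
  rw [congr1, this, probOn2_true, mul_one]
  unfold probOn2
  rw [Finset.sum_eq_single W]
  · simp
  · intro A hA hne
    rw [if_neg]
    intro hWA
    exact hne (Finset.Subset.antisymm (Finset.mem_powerset.1 hA) hWA)
  · intro hW
    exact absurd (Finset.mem_powerset.2 le_rfl) hW

/-- Restriction: an event local to `W ⊆ V` has the same probability on `W`. -/
lemma probOn2_restrict {W V : Finset (ℤ × ℤ)} (hWV : W ⊆ V)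
    (E : Finset (ℤ × ℤ) → Prop) (hl : ∀ A, E A ↔ E (A ∩ W)) :
    probOn2 p V E = probOn2 p W E := by
  have hVsplit : V = W ∪ (V \ W) := by rw [Finset.union_sdiff_of_subset hWV]
  have hdis : Disjoint W (V \ W) := Finset.disjoint_sdiff
  have step := probOn2_union (p := p) hdis E (fun _ => True) hl (by tauto)
  have congr1 : probOn2 p (W ∪ (V \ W)) E
      = probOn2 p (W ∪ (V \ W)) (fun A => E A ∧ True) := probOn2_congr (by tauto)
  rw [hVsplit, congr1, step, probOn2_true, mul_one]

end prob

/-! ### The seed events -/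

/-- A horizontal window of `s - j` cells in row `b*s + j + 1`,
at horizontal offset `i*s`. -/
noncomputable def win (s b j i : ℕ) : Finset (ℤ × ℤ) :=
  (Finset.Icc ((i * s + 1 : ℕ) : ℤ) ((i * s + (s - j) : ℕ) : ℤ)) ×ˢ
    {((b * s + j + 1 : ℕ) : ℤ)}

noncomputable def rowW (s B b j : ℕ) : Finset (ℤ × ℤ) := (Finset.range B).biUnion (fun i => win s b j i)

noncomputable def blockW (s B b : ℕ) : Finset (ℤ × ℤ) := (Finset.range s).biUnion (fun j => rowW s B b j)

def seedEv (s B b : ℕ) (A : Finset (ℤ × ℤ)) : Prop := ∀ j < s, ∃ i < B, win s b j i ⊆ A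

def goodEv (s B : ℕ) (A : Finset (ℤ × ℤ)) : Prop := ∃ b < B, seedEv s B b A

lemma card_win {s j : ℕ} (hj : j < s) (b i : ℕ) : (win s b j i).card = s - j := by
  unfold win
  rw [Finset.card_product, Finset.card_singleton, mul_one, Int.card_Icc]
  have : ((i * s + (s - j) : ℕ) : ℤ) + 1 - ((i * s + 1 : ℕ) : ℤ) = (s - j : ℕ) := by
    push_cast; ring
  rw [this, Int.toNat_natCast]

lemma win_subset_rect {s B k b j i : ℕ} (hj : j < s) (hb : b < B) (hi : i < B)
    (hBk : B * s ≤ k) : win s b j i ⊆ rect2 k k := by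
  intro x hx
  unfold win at hx
  rw [Finset.mem_product] at hx
  obtain ⟨hx1, hx2⟩ := hx
  rw [Finset.mem_Icc] at hx1
  rw [Finset.mem_singleton] at hx2
  unfold rect2
  rw [Finset.mem_product, Finset.mem_Icc, Finset.mem_Icc]
  have hs1 : 1 ≤ s := by omega
  have hik : i * s + (s - j) ≤ k := by
    have := mul_succ_le (s := s) hi
    omega
  have hbk : b * s + j + 1 ≤ k := by
    have := mul_succ_le (s := s) hb
    omega
  constructor
  · constructor
    · have h4 : (1:ℕ) ≤ i * s + 1 := Nat.le_add_left 1 _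
      have : ((1:ℕ) : ℤ) ≤ ((i * s + 1 : ℕ) : ℤ) := by exact_mod_cast h4
      omega
    · have := hx1.2
      have hle : ((i * s + (s - j) : ℕ) : ℤ) ≤ (k : ℤ) := by exact_mod_cast hik
      omega
  · rw [hx2]
    constructor
    · have h4 : (1:ℕ) ≤ b * s + j + 1 := by omega
      exact_mod_cast h4
    · exact_mod_cast hbk

lemma win_y {s b j i : ℕ} {x : ℤ × ℤ} (hx : x ∈ win s b j i) :
    x.2 = ((b * s + j + 1 : ℕ) : ℤ) := by
  unfold win at hx
  rw [Finset.mem_product, Finset.mem_singleton] at hx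
  exact hx.2

lemma win_disjoint_row {s b j : ℕ} {i i' : ℕ} (h : i ≠ i') (hj : j < s) :
    Disjoint (win s b j i) (win s b j i') := by
  rw [Finset.disjoint_left]
  intro x hx hx'
  unfold win at hx hx'
  rw [Finset.mem_product, Finset.mem_Icc] at hx hx'
  have h1 := hx.1
  have h2 := hx'.1
  rcases Nat.lt_or_ge i i' with hlt | hge
  · have h3 : i * s + (s - j) < i' * s + 1 := by
      have := mul_succ_le (s := s) hlt
      omega
    have : ((i * s + (s - j) : ℕ) : ℤ) < ((i' * s + 1 : ℕ) : ℤ) := by exact_mod_cast h3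
    omega
  · have hlt : i' < i := by omega
    have h3 : i' * s + (s - j) < i * s + 1 := by
      have := mul_succ_le (s := s) hlt
      omega
    have : ((i' * s + (s - j) : ℕ) : ℤ) < ((i * s + 1 : ℕ) : ℤ) := by exact_mod_cast h3
    omega

lemma rowW_disjoint {s B b j b' j' : ℕ} (hj : j < s) (hj' : j' < s)
    (h : b ≠ b' ∨ j ≠ j') : Disjoint (rowW s B b j) (rowW s B b' j') := by
  unfold rowW
  rw [Finset.disjoint_biUnion_left]
  intro i _
  rw [Finset.disjoint_biUnion_right]
  intro i' _
  rw [Finset.disjoint_left]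
  intro x hx hx'
  have h1 := win_y hx
  have h2 := win_y hx'
  rw [h1] at h2
  have : b * s + j + 1 = b' * s + j' + 1 := by exact_mod_cast h2
  rcases Nat.lt_or_ge b b' with hlt | hge
  · have := mul_succ_le (s := s) hlt
    omega
  · rcases Nat.lt_or_ge b' b with hlt' | hge'
    · have := mul_succ_le (s := s) hlt'
      omega
    · have hbb : b = b' := by omega
      subst hbb
      have hjj : j ≠ j' := by tauto
      omega

lemma blockW_disjoint {s B b b' : ℕ} (h : b ≠ b') :
    Disjoint (blockW s B b) (blockW s B b') := by
  unfold blockW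
  rw [Finset.disjoint_biUnion_left]
  intro j hj
  rw [Finset.disjoint_biUnion_right]
  intro j' hj'
  exact rowW_disjoint (Finset.mem_range.1 hj) (Finset.mem_range.1 hj') (Or.inl h)

lemma win_subset_rowW {s B b j i : ℕ} (hi : i < B) : win s b j i ⊆ rowW s B b j :=
  fun x hx => Finset.mem_biUnion.2 ⟨i, Finset.mem_range.2 hi, hx⟩

lemma rowW_subset_blockW {s B b j : ℕ} (hj : j < s) : rowW s B b j ⊆ blockW s B b :=
  fun x hx => Finset.mem_biUnion.2 ⟨j, Finset.mem_range.2 hj, hx⟩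

lemma subset_inter_iff_of_subset {W U A : Finset (ℤ × ℤ)} (h : W ⊆ U) :
    W ⊆ A ↔ W ⊆ A ∩ U := by
  rw [Finset.subset_inter_iff]
  exact ⟨fun hA => ⟨hA, h⟩, fun hA => hA.1⟩

section probcomp
variable {p : ℝ}

lemma prob_rowfail {s B b j : ℕ} (hj : j < s) :
    probOn2 p (rowW s B b j) (fun A => ∀ i < B, ¬ win s b j i ⊆ A)
      = (1 - p ^ (s - j)) ^ B := by
  have := probOn2_family (p := p) (n := B) (fun i => win s b j i)
    (fun i A => ¬ win s b j i ⊆ A)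
    (fun i _ i' _ hne => win_disjoint_row hne hj)
    (fun i _ A => by
      show ¬ win s b j i ⊆ A ↔ ¬ win s b j i ⊆ A ∩ win s b j i
      rw [← subset_inter_iff_of_subset (Finset.Subset.refl _)])
  rw [show rowW s B b j = (Finset.range B).biUnion (fun i => win s b j i) from rfl, this]
  rw [Finset.prod_congr rfl (fun i _ => ?_), Finset.prod_const, Finset.card_range]
  rw [probOn2_not, probOn2_subset_event (Finset.Subset.refl _), card_win hj]

lemma prob_block {s B b : ℕ} (hb : True) :
    probOn2 p (blockW s B b) (seedEv s B b)
      = ∏ j ∈ Finset.range s, (1 - (1 - p ^ (s - j)) ^ B) := by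
  have := probOn2_family (p := p) (n := s) (fun j => rowW s B b j)
    (fun j A => ∃ i < B, win s b j i ⊆ A)
    (fun j hj j' hj' hne => rowW_disjoint hj hj' (Or.inr hne))
    (fun j hj A => by
      constructor
      · rintro ⟨i, hi, hw⟩
        exact ⟨i, hi, (subset_inter_iff_of_subset (win_subset_rowW hi)).1 hw⟩
      · rintro ⟨i, hi, hw⟩
        exact ⟨i, hi, by
          refine (subset_inter_iff_of_subset (win_subset_rowW hi)).2 ?_
          exact hw⟩)
  rw [show blockW s B b = (Finset.range s).biUnion (fun j => rowW s B b j) from rfl]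
  rw [show seedEv s B b = fun A => ∀ j < s, ∃ i < B, win s b j i ⊆ A from rfl, this]
  refine Finset.prod_congr rfl fun j hj => ?_
  have hnot : probOn2 p (rowW s B b j) (fun A => ¬ (∀ i < B, ¬ win s b j i ⊆ A))
      = 1 - (1 - p ^ (s - j)) ^ B := by
    rw [probOn2_not, prob_rowfail (Finset.mem_range.1 hj)]
  rw [← hnot]
  refine probOn2_congr fun A _ => ?_
  push_neg
  rfl

lemma prob_notgood {s B k : ℕ} (hBk : B * s ≤ k) (hs : 1 ≤ s) :
    probOn2 p (rect2 k k) (fun A => ¬ goodEv s B A)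
      = (1 - ∏ j ∈ Finset.range s, (1 - (1 - p ^ (s - j)) ^ B)) ^ B := by
  set U : Finset (ℤ × ℤ) := (Finset.range B).biUnion (fun b => blockW s B b) with hU
  have hwinU : ∀ b < B, ∀ j < s, ∀ i < B, win s b j i ⊆ U := by
    intro b hb j hj i hi
    refine Finset.Subset.trans ((win_subset_rowW hi).trans (rowW_subset_blockW hj)) ?_
    exact fun x hx => Finset.mem_biUnion.2 ⟨b, Finset.mem_range.2 hb, hx⟩
  have hUV : U ⊆ rect2 k k := by
    intro x hx
    rw [hU, Finset.mem_biUnion] at hx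
    obtain ⟨b, hb, hx⟩ := hx
    rw [show blockW s B b = (Finset.range s).biUnion (fun j => rowW s B b j) from rfl,
      Finset.mem_biUnion] at hx
    obtain ⟨j, hj, hx⟩ := hx
    rw [show rowW s B b j = (Finset.range B).biUnion (fun i => win s b j i) from rfl,
      Finset.mem_biUnion] at hx
    obtain ⟨i, hi, hx⟩ := hx
    exact win_subset_rect (Finset.mem_range.1 hj) (Finset.mem_range.1 hb)
      (Finset.mem_range.1 hi) hBk hx
  have hlocal : ∀ b < B, ∀ A, seedEv s B b A ↔ seedEv s B b (A ∩ blockW s B b) := by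
    intro b hb A
    constructor
    · intro hA j hj
      obtain ⟨i, hi, hw⟩ := hA j hj
      refine ⟨i, hi, ?_⟩
      exact (subset_inter_iff_of_subset ((win_subset_rowW hi).trans
        (rowW_subset_blockW hj))).1 hw
    · intro hA j hj
      obtain ⟨i, hi, hw⟩ := hA j hj
      exact ⟨i, hi, fun x hx => (Finset.mem_inter.1 (hw hx)).1⟩
  have hlocalU : ∀ A, (¬ goodEv s B A) ↔ ¬ goodEv s B (A ∩ U) := by
    intro A
    have : goodEv s B A ↔ goodEv s B (A ∩ U) := by
      constructor
      · rintro ⟨b, hb, hA⟩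
        refine ⟨b, hb, ?_⟩
        intro j hj
        obtain ⟨i, hi, hw⟩ := hA j hj
        exact ⟨i, hi, (subset_inter_iff_of_subset (hwinU b hb j hj i hi)).1 hw⟩
      · rintro ⟨b, hb, hA⟩
        refine ⟨b, hb, ?_⟩
        intro j hj
        obtain ⟨i, hi, hw⟩ := hA j hj
        exact ⟨i, hi, fun x hx => (Finset.mem_inter.1 (hw hx)).1⟩
    tauto
  rw [probOn2_restrict hUV _ hlocalU]
  have hfam := probOn2_family (p := p) (n := B) (fun b => blockW s B b)
    (fun b A => ¬ seedEv s B b A)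
    (fun b _ b' _ hne => blockW_disjoint hne)
    (fun b hb A => by
      have := hlocal b hb A
      tauto)
  have congr1 : probOn2 p U (fun A => ¬ goodEv s B A)
      = probOn2 p U (fun A => ∀ b < B, ¬ seedEv s B b A) := by
    refine probOn2_congr fun A _ => ?_
    unfold goodEv
    push_neg
    rfl
  rw [congr1, hU, hfam]
  rw [Finset.prod_congr rfl (fun b hb => ?_), Finset.prod_const, Finset.card_range]
  rw [probOn2_not, prob_block trivial]

end probcomp

/-! ### Deterministic filling -/

lemma mem_nbhd2_horiz {s : ℕ} {z : ℤ} (h0 : z ≠ 0) (h : |z| ≤ (s : ℤ)) :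
    ((z, 0) : ℤ × ℤ) ∈ nbhd2 s := by
  unfold nbhd2
  rw [Finset.mem_union]
  left
  rw [Finset.mem_image]
  refine ⟨z, ?_, rfl⟩
  rw [Finset.mem_erase, Finset.mem_Icc]
  rw [abs_le] at h
  exact ⟨h0, h.1, h.2⟩

lemma mem_nbhd2_vert {s : ℕ} {z : ℤ} (h0 : z ≠ 0) (h : |z| ≤ (s : ℤ)) :
    ((0, z) : ℤ × ℤ) ∈ nbhd2 s := by
  unfold nbhd2
  rw [Finset.mem_union]
  right
  rw [Finset.mem_image]
  refine ⟨z, ?_, rfl⟩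
  rw [Finset.mem_erase, Finset.mem_Icc]
  rw [abs_le] at h
  exact ⟨h0, h.1, h.2⟩

/-- Core infection step: `c` horizontal plus `j` vertical infected neighbours. -/
lemma infect_step {s : ℕ} {R Bs : Set (ℤ × ℤ)}
    (hcl : ∀ v ∈ R, s ≤ infCount2 s R Bs v → v ∈ Bs)
    {v : ℤ × ℤ} (hv : v ∈ R) (c j : ℕ) (hcj : c + j = s)
    {ε₁ ε₂ : ℤ} (hε₁ : ε₁ = 1 ∨ ε₁ = -1) (hε₂ : ε₂ = 1 ∨ ε₂ = -1)
    (hhor : ∀ i : ℤ, 1 ≤ i → i ≤ (c : ℤ) →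
      v + (ε₁ * i, 0) ∈ R ∧ v + (ε₁ * i, 0) ∈ Bs)
    (hver : ∀ i : ℤ, 1 ≤ i → i ≤ (j : ℤ) →
      v + (0, ε₂ * i) ∈ R ∧ v + (0, ε₂ * i) ∈ Bs) :
    v ∈ Bs := by
  refine hcl v hv ?_
  have hε₁0 : ε₁ ≠ 0 := by rcases hε₁ with h | h <;> simp [h]
  have hε₂0 : ε₂ ≠ 0 := by rcases hε₂ with h | h <;> simp [h]
  have habs₁ : ∀ i : ℤ, |ε₁ * i| = |i| := by
    intro i; rw [abs_mul]; rcases hε₁ with h | h <;> simp [h]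
  have habs₂ : ∀ i : ℤ, |ε₂ * i| = |i| := by
    intro i; rw [abs_mul]; rcases hε₂ with h | h <;> simp [h]
  set S : Finset (ℤ × ℤ) :=
    ((Finset.Icc (1 : ℤ) (c : ℤ)).image fun i => ((ε₁ * i, 0) : ℤ × ℤ)) ∪
    ((Finset.Icc (1 : ℤ) (j : ℤ)).image fun i => ((0, ε₂ * i) : ℤ × ℤ)) with hS
  have hinj₁ : Set.InjOn (fun i : ℤ => ((ε₁ * i, 0) : ℤ × ℤ)) (Finset.Icc (1:ℤ) (c:ℤ)) := by
    intro a _ b _ hab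
    simp only [Prod.mk.injEq] at hab
    exact mul_left_cancel₀ hε₁0 hab.1
  have hinj₂ : Set.InjOn (fun i : ℤ => ((0, ε₂ * i) : ℤ × ℤ)) (Finset.Icc (1:ℤ) (j:ℤ)) := by
    intro a _ b _ hab
    simp only [Prod.mk.injEq] at hab
    exact mul_left_cancel₀ hε₂0 hab.2
  have hdisj : Disjoint ((Finset.Icc (1 : ℤ) (c : ℤ)).image fun i => ((ε₁ * i, 0) : ℤ × ℤ))
      ((Finset.Icc (1 : ℤ) (j : ℤ)).image fun i => ((0, ε₂ * i) : ℤ × ℤ)) := by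
    rw [Finset.disjoint_left]
    intro x hx hx'
    rw [Finset.mem_image] at hx hx'
    obtain ⟨a, ha, rfl⟩ := hx
    obtain ⟨b, hb, hab⟩ := hx'
    rw [Finset.mem_Icc] at ha
    have : ε₁ * a ≠ 0 := mul_ne_zero hε₁0 (by omega)
    simp only [Prod.mk.injEq] at hab
    exact this hab.1.symm
  have hcard : S.card = s := by
    rw [hS, Finset.card_union_of_disjoint hdisj,
      Finset.card_image_of_injOn hinj₁, Finset.card_image_of_injOn hinj₂,
      Int.card_Icc, Int.card_Icc]
    omega
  have hsub : S ⊆ (nbhd2 s).filter fun x => v + x ∈ R ∧ v + x ∈ Bs := by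
    intro x hx
    rw [hS, Finset.mem_union] at hx
    rw [Finset.mem_filter]
    rcases hx with hx | hx
    · rw [Finset.mem_image] at hx
      obtain ⟨i, hi, rfl⟩ := hx
      rw [Finset.mem_Icc] at hi
      have hcs : (c : ℤ) ≤ (s : ℤ) := by exact_mod_cast Nat.le.intro hcj
      refine ⟨mem_nbhd2_horiz (mul_ne_zero hε₁0 (by omega)) ?_, hhor i hi.1 hi.2⟩
      rw [habs₁, abs_of_nonneg (by omega : (0:ℤ) ≤ i)]
      omega
    · rw [Finset.mem_image] at hx
      obtain ⟨i, hi, rfl⟩ := hx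
      rw [Finset.mem_Icc] at hi
      have hjs : (j : ℤ) ≤ (s : ℤ) := by
        have : j ≤ s := by omega
        exact_mod_cast this
      refine ⟨mem_nbhd2_vert (mul_ne_zero hε₂0 (by omega)) ?_, hver i hi.1 hi.2⟩
      rw [habs₂, abs_of_nonneg (by omega : (0:ℤ) ≤ i)]
      omega
  calc s = S.card := hcard.symm
  _ ≤ _ := Finset.card_le_card hsub

def fullRowSet (Bs : Set (ℤ × ℤ)) (k : ℕ) (y : ℤ) : Prop :=
  ∀ x : ℤ, 1 ≤ x → x ≤ (k : ℤ) → ((x, y) : ℤ × ℤ) ∈ Bs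

lemma mem_rect2_coe {l k : ℕ} {x y : ℤ} :
    ((x, y) : ℤ × ℤ) ∈ (↑(rect2 l k) : Set (ℤ × ℤ)) ↔
      (1 ≤ x ∧ x ≤ (l : ℤ)) ∧ (1 ≤ y ∧ y ≤ (k : ℤ)) := by
  rw [Finset.mem_coe]
  unfold rect2
  rw [Finset.mem_product, Finset.mem_Icc, Finset.mem_Icc]

section filling
variable {s k : ℕ} {Bs : Set (ℤ × ℤ)}
  (hcl : ∀ v ∈ (↑(rect2 k k) : Set (ℤ × ℤ)),
    s ≤ infCount2 s (↑(rect2 k k)) Bs v → v ∈ Bs)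

include hcl

/-- A row with `j` full rows directly below and a run of `c = s - j` infected cells fills. -/
lemma rowfill {y : ℤ} {j c : ℕ} (hcj : c + j = s) (hc : 1 ≤ c)
    (hy1 : 1 ≤ y) (hyk : y ≤ (k : ℤ)) (hyj : 1 ≤ y - (j : ℤ))
    (hvert : ∀ d : ℤ, 1 ≤ d → d ≤ (j : ℤ) → fullRowSet Bs k (y - d))
    {a : ℤ} (ha1 : 1 ≤ a) (hak : a + (c : ℤ) - 1 ≤ (k : ℤ))
    (hrun : ∀ x : ℤ, a ≤ x → x ≤ a + (c : ℤ) - 1 → ((x, y) : ℤ × ℤ) ∈ Bs) :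
    fullRowSet Bs k y := by
  have hver_gen : ∀ x : ℤ, 1 ≤ x → x ≤ (k : ℤ) → ∀ i : ℤ, 1 ≤ i → i ≤ (j : ℤ) →
      ((x, y) : ℤ × ℤ) + (0, -1 * i) ∈ (↑(rect2 k k) : Set (ℤ × ℤ)) ∧
      ((x, y) : ℤ × ℤ) + (0, -1 * i) ∈ Bs := by
    intro x hx1 hxk i hi1 hij
    have hy' : ((x, y) : ℤ × ℤ) + (0, -1 * i) = ((x, y - i) : ℤ × ℤ) := by
      simp [Prod.ext_iff]; ring
    rw [hy']
    constructor
    · rw [mem_rect2_coe]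
      omega
    · exact hvert i hi1 hij x hx1 hxk
  -- rightward spread
  have right : ∀ n : ℕ, ∀ x : ℤ, x = a + (n : ℤ) → x ≤ (k : ℤ) → ((x, y) : ℤ × ℤ) ∈ Bs := by
    intro n
    induction n using Nat.strong_induction_on with
    | _ n ih =>
      intro x hx hxk
      by_cases hseed : x ≤ a + (c : ℤ) - 1
      · exact hrun x (by omega) hseed
      · push_neg at hseed
        have hnc : (c : ℤ) ≤ (n : ℤ) := by omega
        refine infect_step hcl (by rw [mem_rect2_coe]; omega) c j hcj
          (Or.inr rfl) (Or.inr rfl) ?_ ?_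
        · intro i hi1 hic
          have hx' : ((x, y) : ℤ × ℤ) + (-1 * i, 0) = ((x - i, y) : ℤ × ℤ) := by
            simp [Prod.ext_iff]; ring
          rw [hx']
          have hmem : ((x - i, y) : ℤ × ℤ) ∈ Bs := by
            have hni : ((n : ℤ) - i).toNat < n := by omega
            refine ih ((n : ℤ) - i).toNat hni (x - i) ?_ (by omega)
            omega
          exact ⟨by rw [mem_rect2_coe]; omega, hmem⟩
        · intro i hi1 hij
          exact hver_gen x (by omega) hxk i hi1 hij
  -- leftward spread
  have left : ∀ n : ℕ, ∀ x : ℤ, x = a - (n : ℤ) → 1 ≤ x → ((x, y) : ℤ × ℤ) ∈ Bs := by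
    intro n
    induction n using Nat.strong_induction_on with
    | _ n ih =>
      intro x hx hx1
      by_cases hseed : a ≤ x
      · exact hrun x hseed (by omega)
      · push_neg at hseed
        have hn1 : 1 ≤ (n : ℤ) := by omega
        refine infect_step hcl (by rw [mem_rect2_coe]; omega) c j hcj
          (Or.inl rfl) (Or.inr rfl) ?_ ?_
        · intro i hi1 hic
          have hx' : ((x, y) : ℤ × ℤ) + (1 * i, 0) = ((x + i, y) : ℤ × ℤ) := by
            simp [Prod.ext_iff]
          rw [hx']
          have hmem : ((x + i, y) : ℤ × ℤ) ∈ Bs := by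
            by_cases hcase : a ≤ x + i
            · exact hrun (x + i) hcase (by omega)
            · have hni : ((n : ℤ) - i).toNat < n := by omega
              refine ih ((n : ℤ) - i).toNat hni (x + i) ?_ (by omega)
              omega
          exact ⟨by rw [mem_rect2_coe]; omega, hmem⟩
        · intro i hi1 hij
          exact hver_gen x hx1 (by omega) i hi1 hij
  intro x hx1 hxk
  rcases le_or_gt a x with hax | hax
  · exact right (x - a).toNat x (by omega) hxk
  · exact left (a - x).toNat x (by omega) hx1

/-- A row with `s` full rows directly below fills. -/
lemma freefill_up {y : ℤ} (hy1 : 1 ≤ y) (hyk : y ≤ (k : ℤ)) (hys : 1 ≤ y - (s : ℤ))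
    (hvert : ∀ d : ℤ, 1 ≤ d → d ≤ (s : ℤ) → fullRowSet Bs k (y - d)) :
    fullRowSet Bs k y := by
  intro x hx1 hxk
  refine infect_step hcl (v := ((x, y) : ℤ × ℤ)) (by rw [mem_rect2_coe]; omega) 0 s (by omega)
    (Or.inr rfl) (Or.inr rfl) (by intro i hi1 hic; omega) ?_
  intro i hi1 hij
  have hy' : ((x, y) : ℤ × ℤ) + (0, -1 * i) = ((x, y - i) : ℤ × ℤ) := by
    simp [Prod.ext_iff]; ring
  rw [hy']
  exact ⟨by rw [mem_rect2_coe]; omega, hvert i hi1 hij x hx1 hxk⟩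

/-- A row with `s` full rows directly above fills. -/
lemma freefill_down {y : ℤ} (hy1 : 1 ≤ y) (hyk : y ≤ (k : ℤ)) (hys : y + (s : ℤ) ≤ (k : ℤ))
    (hvert : ∀ d : ℤ, 1 ≤ d → d ≤ (s : ℤ) → fullRowSet Bs k (y + d)) :
    fullRowSet Bs k y := by
  intro x hx1 hxk
  refine infect_step hcl (v := ((x, y) : ℤ × ℤ)) (by rw [mem_rect2_coe]; omega) 0 s (by omega)
    (Or.inr rfl) (Or.inl rfl) (by intro i hi1 hic; omega) ?_
  intro i hi1 hij
  have hy' : ((x, y) : ℤ × ℤ) + (0, 1 * i) = ((x, y + i) : ℤ × ℤ) := by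
    simp [Prod.ext_iff]
  rw [hy']
  exact ⟨by rw [mem_rect2_coe]; omega, hvert i hi1 hij x hx1 hxk⟩

end filling

/-- The seed event implies the square fills. -/
lemma good_implies_filled {s B k : ℕ} (hs : 1 ≤ s) (hBk : B * s ≤ k)
    {A : Finset (ℤ × ℤ)} (hA : A ⊆ rect2 k k) (hg : goodEv s B A) :
    IntFilled2 s s (rect2 k k) A := by
  obtain ⟨b, hb, hseed⟩ := hg
  unfold IntFilled2
  apply Set.Subset.antisymm
  · -- closure ⊆ R since R is closed
    intro v hv
    exact hv (↑(rect2 k k)) ⟨Set.inter_subset_right, fun w hw _ => hw⟩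
  · -- R ⊆ every closed superset of A ∩ R
    intro v hv
    intro Bs hBs
    obtain ⟨hAB, hcl⟩ := hBs
    -- setup
    set y₀ : ℤ := ((b * s + 1 : ℕ) : ℤ) with hy₀
    have hbsk : b * s + s ≤ k := by
      have := mul_succ_le (s := s) hb
      omega
    -- the seeded rows fill
    have claim1 : ∀ j : ℕ, j < s → fullRowSet Bs k (y₀ + (j : ℤ)) := by
      intro j
      induction j using Nat.strong_induction_on with
      | _ j ih =>
        intro hj
        obtain ⟨i, hi, hw⟩ := hseed j hj
        have hwin_run : ∀ x : ℤ, ((i * s + 1 : ℕ) : ℤ) ≤ x →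
            x ≤ ((i * s + 1 : ℕ) : ℤ) + ((s - j : ℕ) : ℤ) - 1 →
            ((x, y₀ + (j : ℤ)) : ℤ × ℤ) ∈ Bs := by
          intro x hx1 hx2
          have hmem : ((x, y₀ + (j : ℤ)) : ℤ × ℤ) ∈ win s b j i := by
            unfold win
            rw [Finset.mem_product, Finset.mem_Icc, Finset.mem_singleton]
            constructor
            · constructor
              · exact hx1
              · have : ((i * s + (s - j) : ℕ) : ℤ)
                    = ((i * s + 1 : ℕ) : ℤ) + ((s - j : ℕ) : ℤ) - 1 := by
                  push_cast; ring
                omega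
            · push_cast [hy₀]; ring
          have hmemA : ((x, y₀ + (j : ℤ)) : ℤ × ℤ) ∈ A := hw hmem
          have hmemR : ((x, y₀ + (j : ℤ)) : ℤ × ℤ) ∈ rect2 k k := hA hmemA
          exact hAB ⟨hmemA, hmemR⟩
        have hisk : i * s + s ≤ k := by
          have := mul_succ_le (s := s) hi
          omega
        refine rowfill hcl (j := j) (c := s - j) (by omega) (by omega)
          (by omega) (by push_cast; omega) (by push_cast; omega) ?_
          (a := ((i * s + 1 : ℕ) : ℤ)) (by push_cast; omega) (by push_cast; omega) hwin_run
        intro d hd1 hdj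
        have hd' : y₀ + (j : ℤ) - d = y₀ + ((j - d.toNat : ℕ) : ℤ) := by
          push_cast; omega
        rw [hd']
        exact ih (j - d.toNat) (by omega) (by omega)
    -- rows above the block fill
    have claim2 : ∀ n : ℕ, y₀ + (s : ℤ) - 1 + (n : ℤ) ≤ (k : ℤ) →
        fullRowSet Bs k (y₀ + (s : ℤ) - 1 + (n : ℤ)) := by
      intro n
      induction n using Nat.strong_induction_on with
      | _ n ih =>
        intro hnk
        rcases Nat.eq_zero_or_pos n with rfl | hn
        · have : y₀ + (s : ℤ) - 1 + ((0 : ℕ) : ℤ) = y₀ + ((s - 1 : ℕ) : ℤ) := by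
            push_cast; omega
          rw [this]
          exact claim1 (s - 1) (by omega)
        · refine freefill_up hcl (by push_cast [hy₀]; omega) hnk (by push_cast [hy₀]; omega) ?_
          intro d hd1 hds
          rcases le_or_gt d (n : ℤ) with hdn | hdn
          · have : y₀ + (s : ℤ) - 1 + (n : ℤ) - d
                = y₀ + (s : ℤ) - 1 + (((n : ℤ) - d).toNat : ℤ) := by omega
            rw [this]
            exact ih ((n : ℤ) - d).toNat (by omega) (by omega)
          · have : y₀ + (s : ℤ) - 1 + (n : ℤ) - d
                = y₀ + ((((s : ℤ) - 1 + (n : ℤ) - d).toNat : ℕ) : ℤ) := by omega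
            rw [this]
            exact claim1 ((s : ℤ) - 1 + (n : ℤ) - d).toNat (by omega)
    -- rows below the block fill
    have claim3 : ∀ n : ℕ, 1 ≤ y₀ - (n : ℤ) → fullRowSet Bs k (y₀ - (n : ℤ)) := by
      intro n
      induction n using Nat.strong_induction_on with
      | _ n ih =>
        intro hn1
        rcases Nat.eq_zero_or_pos n with rfl | hn
        · have : y₀ - ((0 : ℕ) : ℤ) = y₀ + ((0 : ℕ) : ℤ) := by omega
          rw [this]
          exact claim1 0 (by omega)
        · refine freefill_down hcl hn1 (by push_cast [hy₀]; omega)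
            (by push_cast [hy₀]; omega) ?_
          intro d hd1 hds
          rcases le_or_gt d ((n : ℤ) - 1) with hdn | hdn
          · have : y₀ - (n : ℤ) + d = y₀ - (((n : ℤ) - d).toNat : ℤ) := by omega
            rw [this]
            exact ih ((n : ℤ) - d).toNat (by omega) (by omega)
          · have : y₀ - (n : ℤ) + d = y₀ + (((d - (n : ℤ)).toNat : ℕ) : ℤ) := by omega
            rw [this]
            exact claim1 (d - (n : ℤ)).toNat (by omega)
    -- conclude
    obtain ⟨x, y⟩ := v
    rw [mem_rect2_coe] at hv
    rcases le_or_gt y₀ y with hyy | hyy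
    · rcases le_or_gt y (y₀ + (s : ℤ) - 1) with hys | hys
      · have : y = y₀ + (((y - y₀).toNat : ℕ) : ℤ) := by omega
        rw [this]
        exact claim1 (y - y₀).toNat (by omega) x hv.1.1 hv.1.2
      · have : y = y₀ + (s : ℤ) - 1 + (((y - (y₀ + (s : ℤ) - 1)).toNat : ℕ) : ℤ) := by omega
        rw [this]
        exact claim2 _ (by omega) x hv.1.1 hv.1.2
    · have : y = y₀ - (((y₀ - y).toNat : ℕ) : ℤ) := by omega
      rw [this]
      exact claim3 _ (by omega) x hv.1.1 hv.1.2

/-! ### Numeric lemmas -/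

lemma one_sub_pow_le_exp {x : ℝ} (hx0 : 0 ≤ x) (hx1 : x ≤ 1) (B : ℕ) :
    (1 - x) ^ B ≤ Real.exp (-((B : ℝ) * x)) := by
  have h1 : 1 - x ≤ Real.exp (-x) := by
    have := Real.add_one_le_exp (-x)
    linarith
  calc (1 - x) ^ B ≤ (Real.exp (-x)) ^ B := pow_le_pow_left₀ (by linarith) h1 B
  _ = Real.exp ((B : ℝ) * (-x)) := (Real.exp_nat_mul (-x) B).symm
  _ = Real.exp (-((B : ℝ) * x)) := by ring_nf

lemma min_half_le_one_sub_exp {y : ℝ} (hy : 0 ≤ y) :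
    min y 1 / 2 ≤ 1 - Real.exp (-y) := by
  rcases le_or_gt y 1 with h1 | h1
  · rw [min_eq_left h1]
    have hy1 : (0:ℝ) < 1 + y := by linarith
    have he : Real.exp (-y) ≤ 1 / (1 + y) := by
      rw [Real.exp_neg, one_div]
      exact inv_anti₀ hy1 (by linarith [Real.add_one_le_exp y])
    have h2 : 1 / (1 + y) ≤ 1 - y / 2 := by
      rw [div_le_iff₀ (by linarith)]
      nlinarith
    linarith
  · rw [min_eq_right (by linarith)]
    have he : Real.exp (-y) ≤ Real.exp (-1) := by
      apply Real.exp_le_exp.2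
      linarith
    have h2 : Real.exp (-1) ≤ 1 / 2 := by
      rw [Real.exp_neg, show (1:ℝ)/2 = 2⁻¹ by norm_num]
      exact inv_anti₀ (by norm_num) (by nlinarith [Real.exp_one_gt_d9])
    linarith

lemma tseq_ineq {s : ℕ} (hs : 3 ≤ s) : tseq s * (tseq s + 3) < 2 * s := by
  set x := Real.sqrt (9 + 8 * (s : ℝ)) with hx
  have hx0 : 0 ≤ (9 : ℝ) + 8 * (s : ℝ) := by positivity
  have hx2 : x ^ 2 = 9 + 8 * (s : ℝ) := Real.sq_sqrt hx0
  have hx5 : 5 ≤ x := by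
    have h25 : (25 : ℝ) ≤ 9 + 8 * (s : ℝ) := by
      have : (3 : ℝ) ≤ (s : ℝ) := by exact_mod_cast hs
      linarith
    nlinarith [Real.sqrt_nonneg (9 + 8 * (s : ℝ))]
  have hceil : ((tseq s : ℕ) : ℝ) < (x - 5) / 2 + 1 :=
    Nat.ceil_lt_add_one (by linarith)
  have hr : ((tseq s : ℕ) : ℝ) * (((tseq s : ℕ) : ℝ) + 3) < 2 * (s : ℝ) := by
    have ht0 : (0 : ℝ) ≤ ((tseq s : ℕ) : ℝ) := by positivity
    nlinarith
  have : ((tseq s * (tseq s + 3) : ℕ) : ℝ) < ((2 * s : ℕ) : ℝ) := by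
    push_cast
    convert hr using 1
  exact_mod_cast this

lemma sumT {s m : ℕ} (hm : m < s) :
    2 * (∑ j ∈ Finset.range s, (s - j - m)) = (s - m) * (s - m + 1) := by
  set u := s - m with hu
  have h1 : ∀ j, s - j - m = u - j := fun j => by omega
  rw [Finset.sum_congr rfl (fun j _ => h1 j)]
  have h2 : ∑ j ∈ Finset.range s, (u - j) = ∑ j ∈ Finset.range u, (u - j) := by
    refine (Finset.sum_subset (Finset.range_subset_range.2 (by omega)) ?_).symm
    intro j hj hnj
    rw [Finset.mem_range] at hj
    rw [Finset.mem_range] at hnj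
    omega
  rw [h2]
  have h3 : ∑ j ∈ Finset.range u, (u - j) = ∑ j ∈ Finset.range u, (j + 1) := by
    rw [← Finset.sum_range_reflect (fun j => j + 1) u]
    refine Finset.sum_congr rfl fun j hj => ?_
    rw [Finset.mem_range] at hj
    omega
  rw [h3, Finset.sum_add_distrib, Finset.sum_const, Finset.card_range, smul_eq_mul, mul_one]
  have h4 := Finset.sum_range_id_mul_two u
  have hu1 : 1 ≤ u := by omega
  nlinarith [h4, Nat.sub_add_cancel hu1]

set_option maxHeartbeats 2000000 in
/-- for `s - t_s ≤ m ≤ s-1`, with `δ(s,m) = -m² + (2s+3)m - s(s+1) > 0`,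
squares of side between `ε₀ p^{-m}` and `ε₀ p^{-(m+1)}` fill with probability
`≥ 1 - exp(-κ p^{-δ(s,m)/2})`. -/
theorem stmt16 (s m : ℕ) (hs : 3 ≤ s) (hm1 : s - tseq s ≤ m) (hm2 : m ≤ s - 1) :
    0 < -(m : ℝ) ^ 2 + (2 * (s : ℝ) + 3) * (m : ℝ) - (s : ℝ) * ((s : ℝ) + 1) ∧
    ∃ ε₀ κ p₀ : ℝ, 0 < ε₀ ∧ 0 < κ ∧ 0 < p₀ ∧ ∀ p : ℝ, 0 < p → p < p₀ →
      ∀ k : ℕ, ε₀ * p ^ (-(m : ℝ)) ≤ (k : ℝ) → (k : ℝ) < ε₀ * p ^ (-((m : ℝ) + 1)) →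
        1 - Real.exp (-κ * p ^
            (-((-(m : ℝ) ^ 2 + (2 * (s : ℝ) + 3) * (m : ℝ) - (s : ℝ) * ((s : ℝ) + 1)) / 2))) ≤
          probOn2 p (rect2 k k) (IntFilled2 s s (rect2 k k)) := by
  have hms : m < s := by omega
  set u : ℕ := s - m with hu
  have hut : u ≤ tseq s := by omega
  have huineq : u * (u + 3) < 2 * s :=
    lt_of_le_of_lt (Nat.mul_le_mul hut (by omega)) (tseq_ineq hs)
  set Tn : ℕ := ∑ j ∈ Finset.range s, (s - j - m) with hTn
  have h2T : 2 * Tn = u * (u + 1) := sumT hms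
  have hTm : Tn < m := by
    have hring : u * (u + 3) = u * (u + 1) + 2 * u := by ring
    have hsu : s = m + u := by omega
    linarith [h2T, huineq, hring]
  have hu_cast : ((u : ℕ) : ℝ) = (s : ℝ) - m := by
    rw [hu]; push_cast [Nat.cast_sub hms.le]; ring
  have hT_cast : 2 * (Tn : ℝ) = ((s : ℝ) - m) * ((s : ℝ) - m + 1) := by
    have : ((2 * Tn : ℕ) : ℝ) = ((u * (u + 1) : ℕ) : ℝ) := by exact_mod_cast h2T
    push_cast at this
    rw [hu_cast] at this
    linarith
  have hδ : -(m : ℝ) ^ 2 + (2 * (s : ℝ) + 3) * (m : ℝ) - (s : ℝ) * ((s : ℝ) + 1)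
      = 2 * ((m : ℝ) - (Tn : ℝ)) := by linear_combination hT_cast
  have hTmR : (Tn : ℝ) < (m : ℝ) := by exact_mod_cast hTm
  have hδpos : 0 < -(m : ℝ) ^ 2 + (2 * (s : ℝ) + 3) * (m : ℝ) - (s : ℝ) * ((s : ℝ) + 1) := by
    rw [hδ]; linarith
  refine ⟨hδpos, 4 * (s : ℝ), (1/2 : ℝ) ^ s, 1/2, by positivity, by positivity, by norm_num,
    ?_⟩
  intro p hp hp2 k hk1 hk2
  have hp1 : p ≤ 1 := by linarith
  set B : ℕ := k / s with hB
  have hs1 : 1 ≤ s := by omega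
  have hBk : B * s ≤ k := Nat.div_mul_le_self k s
  have hmod : B * s + k % s = k := by
    rw [hB, Nat.mul_comm]; exact Nat.div_add_mod k s
  have hmodlt : k % s < s := Nat.mod_lt k (by omega)
  set q : ℝ := p ^ (-(m : ℝ)) with hq
  have hqpos : 0 < q := Real.rpow_pos_of_pos hp _
  have hq1 : 1 ≤ q :=
    Real.one_le_rpow_of_pos_of_le_one_of_nonpos hp hp1 (neg_nonpos.2 (Nat.cast_nonneg m))
  -- lower bound on B
  have hB2 : 2 * q ≤ (B : ℝ) := by
    have hkub : (k : ℝ) ≤ (B : ℝ) * s + (s : ℝ) - 1 := by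
      have h1 : ((B * s + k % s : ℕ) : ℝ) = (k : ℝ) := by exact_mod_cast hmod
      have h2 : ((k % s : ℕ) : ℝ) ≤ (s : ℝ) - 1 := by
        have : k % s ≤ s - 1 := by omega
        have h3 : ((k % s : ℕ) : ℝ) ≤ ((s - 1 : ℕ) : ℝ) := by exact_mod_cast this
        rw [Nat.cast_sub hs1] at h3
        simpa using h3
      push_cast at h1
      linarith
    have hspos : (0 : ℝ) < (s : ℝ) := by positivity
    have hmul : 2 * q * (s : ℝ) ≤ (B : ℝ) * (s : ℝ) := by nlinarith [hk1, hq1]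
    exact le_of_mul_le_mul_right hmul hspos
  have hBpos : (0 : ℝ) ≤ (B : ℝ) := Nat.cast_nonneg B
  -- per-factor lower bounds
  set Q : ℝ := ∏ j ∈ Finset.range s, (1 - (1 - p ^ (s - j)) ^ B) with hQ
  have hfact : ∀ j ∈ Finset.range s,
      (1/2 : ℝ) * p ^ (s - j - m) ≤ 1 - (1 - p ^ (s - j)) ^ B := by
    intro j hj
    rw [Finset.mem_range] at hj
    set x : ℝ := p ^ (s - j) with hx
    have hx0 : 0 ≤ x := by positivity
    have hx1 : x ≤ 1 := pow_le_one₀ hp.le hp1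
    have f1 : (1 - x) ^ B ≤ Real.exp (-((B : ℝ) * x)) := one_sub_pow_le_exp hx0 hx1 B
    have f2 : min ((B : ℝ) * x) 1 / 2 ≤ 1 - Real.exp (-((B : ℝ) * x)) :=
      min_half_le_one_sub_exp (by positivity)
    have f3 : p ^ (s - j - m) ≤ min ((B : ℝ) * x) 1 := by
      refine le_min ?_ (pow_le_one₀ hp.le hp1)
      -- B * x ≥ 2 q x ≥ 2 p^{(s-j)-m} ≥ 2 p^{s-j-m} ≥ p^cj
      have hqx : q * x = p ^ (((s - j : ℕ) : ℝ) - (m : ℝ)) := by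
        rw [hx, hq, ← Real.rpow_natCast p (s - j), ← Real.rpow_add hp]
        ring_nf
      have hexp : p ^ (((s - j : ℕ) : ℝ) - (m : ℝ)) ≥ p ^ (((s - j - m : ℕ) : ℝ)) := by
        apply Real.rpow_le_rpow_of_exponent_ge hp hp1
        have hcj : (s - j : ℕ) ≤ (s - j - m) + m := by omega
        have : ((s - j : ℕ) : ℝ) ≤ ((s - j - m : ℕ) : ℝ) + (m : ℝ) := by exact_mod_cast hcj
        linarith
      have hcast : p ^ (((s - j - m : ℕ) : ℝ)) = p ^ (s - j - m) :=
        Real.rpow_natCast p (s - j - m)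
      have hBx : 2 * (q * x) ≤ (B : ℝ) * x := by nlinarith [hB2, hx0]
      have hpx : (0:ℝ) < p ^ (s - j - m) := by positivity
      calc p ^ (s - j - m) ≤ 2 * (q * x) := by
            rw [hqx]
            calc (p : ℝ) ^ (s - j - m) = p ^ (((s - j - m : ℕ) : ℝ)) := hcast.symm
            _ ≤ p ^ (((s - j : ℕ) : ℝ) - (m : ℝ)) := hexp
            _ ≤ 2 * p ^ (((s - j : ℕ) : ℝ) - (m : ℝ)) := by
                nlinarith [Real.rpow_pos_of_pos hp (((s - j : ℕ) : ℝ) - (m : ℝ))]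
      _ ≤ (B : ℝ) * x := hBx
    calc (1/2 : ℝ) * p ^ (s - j - m) ≤ min ((B : ℝ) * x) 1 / 2 := by linarith
    _ ≤ 1 - Real.exp (-((B : ℝ) * x)) := f2
    _ ≤ 1 - (1 - x) ^ B := by linarith
  -- lower bound on Q
  have hQlb : (1/2 : ℝ) ^ s * p ^ Tn ≤ Q := by
    have := Finset.prod_le_prod (f := fun j => (1/2 : ℝ) * p ^ (s - j - m))
      (g := fun j => 1 - (1 - p ^ (s - j)) ^ B) (s := Finset.range s)
      (fun j _ => by positivity) hfact
    calc (1/2 : ℝ) ^ s * p ^ Tn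
        = ∏ j ∈ Finset.range s, ((1/2 : ℝ) * p ^ (s - j - m)) := by
          rw [Finset.prod_mul_distrib, Finset.prod_const, Finset.card_range,
            Finset.prod_pow_eq_pow_sum, hTn]
    _ ≤ Q := this
  have hQ1 : Q ≤ 1 := by
    refine Finset.prod_le_one (fun j _ => ?_) (fun j _ => ?_)
    · have hple : p ^ (s - j) ≤ 1 := pow_le_one₀ hp.le hp1
      have hppos : (0:ℝ) < p ^ (s - j) := pow_pos hp _
      have : (1 - p ^ (s - j)) ^ B ≤ 1 := pow_le_one₀ (by linarith) (by linarith)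
      linarith
    · have hple : p ^ (s - j) ≤ 1 := pow_le_one₀ hp.le hp1
      have : (0:ℝ) ≤ (1 - p ^ (s - j)) ^ B := pow_nonneg (by linarith) B
      linarith
  have hQ0 : 0 ≤ Q := by
    have hs0 : 0 ∈ Finset.range s := Finset.mem_range.2 (by omega)
    calc (0:ℝ) ≤ (1/2 : ℝ) ^ s * p ^ Tn := by positivity
    _ ≤ Q := hQlb
  -- the exponent identity
  have hE : (-((-(m : ℝ) ^ 2 + (2 * (s : ℝ) + 3) * (m : ℝ) - (s : ℝ) * ((s : ℝ) + 1)) / 2))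
      = (Tn : ℝ) - (m : ℝ) := by rw [hδ]; ring
  have hqT : q * p ^ Tn = p ^ ((Tn : ℝ) - (m : ℝ)) := by
    rw [hq, ← Real.rpow_natCast p Tn, ← Real.rpow_add hp]
    ring_nf
  -- final numeric bound
  have hkey : (1/2 : ℝ) ^ s * p ^ ((Tn : ℝ) - (m : ℝ)) ≤ (B : ℝ) * Q := by
    have h1 : 2 * q * ((1/2 : ℝ) ^ s * p ^ Tn) ≤ (B : ℝ) * Q := by
      apply mul_le_mul hB2 hQlb (by positivity) hBpos
    calc (1/2 : ℝ) ^ s * p ^ ((Tn : ℝ) - (m : ℝ))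
        ≤ 2 * ((1/2 : ℝ) ^ s * p ^ ((Tn : ℝ) - (m : ℝ))) := by
          nlinarith [Real.rpow_pos_of_pos hp ((Tn : ℝ) - (m : ℝ)),
            pow_pos (by norm_num : (0:ℝ) < 1/2) s]
    _ = 2 * q * ((1/2 : ℝ) ^ s * p ^ Tn) := by rw [← hqT]; ring
    _ ≤ (B : ℝ) * Q := h1
  have hfinal : (1 - Q) ^ B ≤ Real.exp
      (-((1/2 : ℝ) ^ s * p ^
        (-((-(m : ℝ) ^ 2 + (2 * (s : ℝ) + 3) * (m : ℝ) - (s : ℝ) * ((s : ℝ) + 1)) / 2)))) := by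
    calc (1 - Q) ^ B ≤ Real.exp (-((B : ℝ) * Q)) := one_sub_pow_le_exp hQ0 hQ1 B
    _ ≤ _ := by
        apply Real.exp_le_exp.2
        rw [hE]
        linarith [hkey]
  -- probability chain
  have hnotg : probOn2 p (rect2 k k) (fun A => ¬ goodEv s B A) = (1 - Q) ^ B := by
    rw [prob_notgood hBk hs1, hQ]
  have hcomp := probOn2_not (p := p) (rect2 k k) (goodEv s B)
  have hgood_eq : probOn2 p (rect2 k k) (goodEv s B) = 1 - (1 - Q) ^ B := by
    rw [hnotg] at hcomp
    linarith
  have hmono : probOn2 p (rect2 k k) (goodEv s B)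
      ≤ probOn2 p (rect2 k k) (IntFilled2 s s (rect2 k k)) := by
    refine probOn2_mono hp.le hp1 fun A hA hg => ?_
    exact good_implies_filled hs1 hBk (Finset.mem_powerset.1 hA) hg
  have := hgood_eq ▸ hmono
  calc 1 - Real.exp (-(1/2 : ℝ) ^ s * p ^
      (-((-(m : ℝ) ^ 2 + (2 * (s : ℝ) + 3) * (m : ℝ) - (s : ℝ) * ((s : ℝ) + 1)) / 2)))
      ≤ 1 - (1 - Q) ^ B := by
        have h2 : -(1/2 : ℝ) ^ s * p ^
            (-((-(m : ℝ) ^ 2 + (2 * (s : ℝ) + 3) * (m : ℝ) - (s : ℝ) * ((s : ℝ) + 1)) / 2))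
            = -((1/2 : ℝ) ^ s * p ^
            (-((-(m : ℝ) ^ 2 + (2 * (s : ℝ) + 3) * (m : ℝ) - (s : ℝ) * ((s : ℝ) + 1)) / 2))) := by
          ring
        rw [h2]
        linarith [hfinal]
  _ = probOn2 p (rect2 k k) (goodEv s B) := hgood_eq.symm
  _ ≤ probOn2 p (rect2 k k) (IntFilled2 s s (rect2 k k)) := hmono
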